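/- arXiv:math/0411470 — 2 statements merged into one kernel-verified Lean document; each statement's English description precedes it below -/
import Mathlib

section
/- Let G be a Garside group with positive monoid G⁺ and Garside element Δ, and let g ∈ G. Suppose gⁿ is conjugate to g⁻ⁿ for some integer n ≥ 1. If r is the greatest element of {t ∈ ℤ : Δ^t ≤_L h for some conjugate h of g} and s is the least element of {t ∈ ℤ : h ≤_L Δ^t for some conjugate h of g}, then r = −s (i.e. inf_s(g) = −sup_s(g)). -/
/-!
Conjugation by `Δ` preserves the positive monoid, so `Δ ^ t ≤_L h ↔ Δ ^ t ≤_R h`. As inversion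
exchanges `≤_L` and `≤_R`, `h ≤_L Δ ^ t ↔ Δ ^ (-t) ≤_L h⁻¹`, whence `sup_s g = -inf_s g⁻¹`.
Moreover `Δ ^ t` lies below some conjugate of `g` iff `Δ ^ (n * t)` lies below some conjugate
of `gⁿ`: one direction is superadditivity, the other conjugates `g` by the `≤_R`-meet of the
elements `Δ ^ (-(i * t)) * g ^ i`, `i < n`. Hence `inf_s g` depends only on the conjugacy class
of `gⁿ`, and `gⁿ ~ g⁻ⁿ` gives `inf_s g = inf_s g⁻¹ = -sup_s g`.
-/

/-- `a` left-divides `b` in the monoid `M`. -/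
def dvdL {M : Type*} [Monoid M] (a b : M) : Prop := ∃ c, a * c = b

/-- `a` right-divides `b` in the monoid `M`. -/
def dvdR {M : Type*} [Monoid M] (a b : M) : Prop := ∃ c, c * a = b

/-- `L(a)`, the set of left divisors of `a`. -/
def Lset {M : Type*} [Monoid M] (a : M) : Set M := {x | dvdL x a}

/-- `R(a)`, the set of right divisors of `a`. -/
def Rset {M : Type*} [Monoid M] (a : M) : Set M := {x | dvdR x a}

/-- `a` is an atom: `a ≠ 1` and `a = b * c` implies `b = 1` or `c = 1`. -/
def IsAtomElt {M : Type*} [Monoid M] (a : M) : Prop :=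
  a ≠ 1 ∧ ∀ b c : M, a = b * c → b = 1 ∨ c = 1

/-- `M` is atomic: every element is a finite product of atoms, and the lengths of
expressions of a given element as products of atoms are bounded above. -/
def Atomic (M : Type*) [Monoid M] : Prop :=
  (∀ a : M, ∃ l : List M, (∀ x ∈ l, IsAtomElt x) ∧ l.prod = a) ∧
  (∀ a : M, ∃ N : ℕ, ∀ l : List M, (∀ x ∈ l, IsAtomElt x) → l.prod = a → l.length ≤ N)

/-- `Δ` is a Garside element: `L(Δ) = R(Δ)` and `L(Δ)` generates `M`. -/
def IsGarsideElt {M : Type*} [Monoid M] (Δ : M) : Prop :=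
  Lset Δ = Rset Δ ∧ Submonoid.closure (Lset Δ) = ⊤

/-- `d` is a greatest common lower bound of `a` and `b` with respect to `≤_L`. -/
def IsGlbL {M : Type*} [Monoid M] (a b d : M) : Prop :=
  dvdL d a ∧ dvdL d b ∧ ∀ c : M, dvdL c a → dvdL c b → dvdL c d

/-- `d` is a least common upper bound of `a` and `b` with respect to `≤_L`. -/
def IsLubL {M : Type*} [Monoid M] (a b d : M) : Prop :=
  dvdL a d ∧ dvdL b d ∧ ∀ c : M, dvdL a c → dvdL b c → dvdL d c

/-- `d` is a greatest common lower bound of `a` and `b` with respect to `≤_R`. -/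
def IsGlbR {M : Type*} [Monoid M] (a b d : M) : Prop :=
  dvdR d a ∧ dvdR d b ∧ ∀ c : M, dvdR c a → dvdR c b → dvdR c d

/-- `d` is a least common upper bound of `a` and `b` with respect to `≤_R`. -/
def IsLubR {M : Type*} [Monoid M] (a b d : M) : Prop :=
  dvdR a d ∧ dvdR b d ∧ ∀ c : M, dvdR a c → dvdR b c → dvdR d c

/-- `M` is a Garside monoid: finitely generated, left and right cancellative, atomic,
`≤_L`- and `≤_R`-lattice conditions, and it possesses a Garside element. -/
def IsGarsideMonoid (M : Type*) [Monoid M] : Prop :=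
  (∃ S : Set M, S.Finite ∧ Submonoid.closure S = ⊤) ∧
  (∀ a b c : M, a * b = a * c → b = c) ∧
  (∀ a b c : M, b * a = c * a → b = c) ∧
  Atomic M ∧
  (∀ a b : M, ∃ d, IsGlbL a b d) ∧
  (∀ a b : M, ∃ d, IsLubL a b d) ∧
  (∀ a b : M, ∃ d, IsGlbR a b d) ∧
  (∀ a b : M, ∃ d, IsLubR a b d) ∧
  (∃ Δ : M, IsGarsideElt Δ)

/-- Group-level left divisibility: `a ≤_L b` iff `a⁻¹ * b` is positive. -/
def gdvdL {G : Type*} [Group G] (P : Submonoid G) (a b : G) : Prop := a⁻¹ * b ∈ P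

/-- Group-level right divisibility: `a ≤_R b` iff `b * a⁻¹` is positive. -/
def gdvdR {G : Type*} [Group G] (P : Submonoid G) (a b : G) : Prop := b * a⁻¹ ∈ P

/-- `G` is a Garside group with positive monoid `P` and chosen Garside element `Δ`:
`P` is a Garside monoid, every element of `G` is a fraction `a * b⁻¹` of positive
elements, and `Δ` is a Garside element of `P`. -/
def IsGarsideGroup {G : Type*} [Group G] (P : Submonoid G) (Δ : G) : Prop :=
  IsGarsideMonoid P ∧
  (∀ g : G, ∃ a b : P, g = (a : G) * (b : G)⁻¹) ∧
  ∃ hΔ : Δ ∈ P, IsGarsideElt (⟨Δ, hΔ⟩ : P)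

section GarsideGroup

variable {G : Type*} [Group G] {P : Submonoid G} {Δ : G}

lemma dvdL_iff_gdvdL (x y : P) : dvdL x y ↔ gdvdL P x y := by
  constructor
  · rintro ⟨c, rfl⟩
    simp [gdvdL]
  · intro h
    exact ⟨⟨_, h⟩, Subtype.ext (mul_inv_cancel_left _ _)⟩

lemma dvdR_iff_gdvdR (x y : P) : dvdR x y ↔ gdvdR P x y := by
  constructor
  · rintro ⟨c, rfl⟩
    simp [gdvdR]
  · intro h
    exact ⟨⟨_, h⟩, Subtype.ext (inv_mul_cancel_right _ _)⟩

lemma gdvdR_refl (P : Submonoid G) (a : G) : gdvdR P a a := by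
  simp [gdvdR, P.one_mem]

lemma gdvdR_trans {a b c : G} (hab : gdvdR P a b) (hbc : gdvdR P b c) : gdvdR P a c := by
  simpa [gdvdR, mul_assoc] using P.mul_mem hbc hab

lemma gdvdR_mul_right_iff {a b : G} (w : G) : gdvdR P (a * w) (b * w) ↔ gdvdR P a b := by
  simp [gdvdR, mul_assoc]

lemma gdvdL_iff_gdvdR_of_isGarsideElt (hΔ : Δ ∈ P) (hΔG : IsGarsideElt (⟨Δ, hΔ⟩ : P))
    {x : G} (hx : x ∈ P) : gdvdL P x Δ ↔ gdvdR P x Δ :=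
  (dvdL_iff_gdvdL _ _).symm.trans
    ((Set.ext_iff.1 hΔG.1 ⟨x, hx⟩).trans (dvdR_iff_gdvdR _ _))

lemma closure_simples_eq (hΔ : Δ ∈ P) (hΔG : IsGarsideElt (⟨Δ, hΔ⟩ : P)) :
    Submonoid.closure {x | x ∈ P ∧ gdvdL P x Δ} = P := by
  refine le_antisymm (Submonoid.closure_le.2 fun x hx => hx.1) fun x hx => ?_
  have hx' : (⟨x, hx⟩ : P) ∈ Submonoid.closure (Lset (⟨Δ, hΔ⟩ : P)) :=
    hΔG.2 ▸ Submonoid.mem_top _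
  have := Submonoid.mem_map_of_mem P.subtype hx'
  rw [MonoidHom.map_mclosure] at this
  refine Submonoid.closure_mono ?_ this
  rintro _ ⟨y, hy, rfl⟩
  exact ⟨y.2, (dvdL_iff_gdvdL _ _).1 hy⟩

lemma conj_mem_of_isGarsideElt (hΔ : Δ ∈ P) (hΔG : IsGarsideElt (⟨Δ, hΔ⟩ : P))
    {x : G} (hx : x ∈ P) : Δ * x * Δ⁻¹ ∈ P ∧ Δ⁻¹ * x * Δ ∈ P := by
  rw [← closure_simples_eq hΔ hΔG] at hx
  induction hx using Submonoid.closure_induction with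
  | mem x hx =>
    obtain ⟨hxP, hxΔ⟩ := hx
    have hxΔ' := (gdvdL_iff_gdvdR_of_isGarsideElt hΔ hΔG hxP).1 hxΔ
    -- the complements `Δ * x⁻¹` and `x⁻¹ * Δ` of `x` are again simple
    constructor
    · have := (gdvdL_iff_gdvdR_of_isGarsideElt hΔ hΔG hxΔ').1 (by simpa [gdvdL] using hxP)
      simpa [gdvdR, mul_assoc] using this
    · have := (gdvdL_iff_gdvdR_of_isGarsideElt hΔ hΔG hxΔ).2 (by simpa [gdvdR] using hxP)
      simpa [gdvdL, mul_assoc] using this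
  | one => simp [P.one_mem]
  | mul a b _ _ ha hb =>
    constructor
    · simpa [mul_assoc] using P.mul_mem ha.1 hb.1
    · simpa [mul_assoc] using P.mul_mem ha.2 hb.2

lemma zpow_mul_mul_zpow_neg_mem_of_isGarsideElt (hΔ : Δ ∈ P)
    (hΔG : IsGarsideElt (⟨Δ, hΔ⟩ : P)) (t : ℤ) {x : G} (hx : x ∈ P) : Δ ^ t * x * Δ ^ (-t) ∈ P := by
  induction t using Int.induction_on with
  | zero => simpa using hx
  | succ k ih =>
    convert (conj_mem_of_isGarsideElt hΔ hΔG ih).1 using 1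
    group
  | pred k ih =>
    convert (conj_mem_of_isGarsideElt hΔ hΔG ih).2 using 1
    group

lemma inv_mul_pow_mem_of_isGarsideElt (hΔ : Δ ∈ P) (hΔG : IsGarsideElt (⟨Δ, hΔ⟩ : P))
    {x : G} (hx : x ∈ P) : ∃ N : ℕ, x⁻¹ * Δ ^ N ∈ P := by
  rw [← closure_simples_eq hΔ hΔG] at hx
  induction hx using Submonoid.closure_induction with
  | mem x hx => exact ⟨1, by rw [pow_one]; exact hx.2⟩
  | one => exact ⟨0, by simp [P.one_mem]⟩
  | mul a b _ _ ha hb =>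
    obtain ⟨N₁, ha⟩ := ha
    obtain ⟨N₂, hb⟩ := hb
    refine ⟨N₁ + N₂, ?_⟩
    convert P.mul_mem hb (zpow_mul_mul_zpow_neg_mem_of_isGarsideElt hΔ hΔG (-N₂) ha) using 1
    group

lemma exists_gdvdR_glb_of_mem (hglb : ∀ a b : P, ∃ d, IsGlbR a b d) {a b : G} (ha : a ∈ P)
    (hb : b ∈ P) : ∃ d ∈ P, gdvdR P d a ∧ gdvdR P d b ∧
      ∀ c ∈ P, gdvdR P c a → gdvdR P c b → gdvdR P c d := by
  obtain ⟨d, hda, hdb, hd⟩ := hglb ⟨a, ha⟩ ⟨b, hb⟩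
  refine ⟨d, d.2, (dvdR_iff_gdvdR _ _).1 hda, (dvdR_iff_gdvdR _ _).1 hdb,
    fun c hc hca hcb => ?_⟩
  exact (dvdR_iff_gdvdR ⟨c, hc⟩ d).1
    (hd ⟨c, hc⟩ ((dvdR_iff_gdvdR _ _).2 hca) ((dvdR_iff_gdvdR _ _).2 hcb))

/- The meet of `a * p` and `b * p` lies above `p`, so it is the meet of `a` and `b` times `p`. -/
lemma gdvdR_mul_of_gdvdR_glb (hglb : ∀ a b : P, ∃ d, IsGlbR a b d) {a b d p c : G}
    (ha : a ∈ P) (hb : b ∈ P) (hp : p ∈ P) (hd : ∀ c ∈ P, gdvdR P c a → gdvdR P c b → gdvdR P c d)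
    (hc : c ∈ P) (hca : gdvdR P c (a * p)) (hcb : gdvdR P c (b * p)) : gdvdR P c (d * p) := by
  obtain ⟨D, -, hDa, hDb, hD⟩ :=
    exists_gdvdR_glb_of_mem hglb (P.mul_mem ha hp) (P.mul_mem hb hp)
  have hpD : gdvdR P p D := hD p hp (by simpa [gdvdR] using ha) (by simpa [gdvdR] using hb)
  have hDd : gdvdR P (D * p⁻¹) d :=
    hd _ hpD ((gdvdR_mul_right_iff p).1 (by simpa using hDa))
      ((gdvdR_mul_right_iff p).1 (by simpa using hDb))
  exact gdvdR_trans (hD c hc hca hcb) (by simpa using (gdvdR_mul_right_iff p).2 hDd)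

namespace IsGarsideGroup

lemma zpow_mul_mul_zpow_neg_mem (hG : IsGarsideGroup P Δ) (t : ℤ) {x : G} (hx : x ∈ P) :
    Δ ^ t * x * Δ ^ (-t) ∈ P := by
  obtain ⟨-, -, hΔ, hΔG⟩ := hG
  exact zpow_mul_mul_zpow_neg_mem_of_isGarsideElt hΔ hΔG t hx

lemma gdvdR_zpow_mul_left (hG : IsGarsideGroup P Δ) (t : ℤ) {a b : G} (h : gdvdR P a b) :
    gdvdR P (Δ ^ t * a) (Δ ^ t * b) := by
  unfold gdvdR at h ⊢
  convert hG.zpow_mul_mul_zpow_neg_mem t h using 1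
  group

lemma gdvdL_zpow_iff_gdvdR (hG : IsGarsideGroup P Δ) (t : ℤ) (z : G) :
    gdvdL P (Δ ^ t) z ↔ gdvdR P (Δ ^ t) z := by
  unfold gdvdL gdvdR
  constructor <;> intro h
  · convert hG.zpow_mul_mul_zpow_neg_mem t h using 1
    group
  · convert hG.zpow_mul_mul_zpow_neg_mem (-t) h using 1
    group

lemma exists_mul_pow_mem (hG : IsGarsideGroup P Δ) (g : G) : ∃ N : ℕ, g * Δ ^ N ∈ P := by
  obtain ⟨-, hfrac, hΔ, hΔG⟩ := hG
  obtain ⟨a, b, rfl⟩ := hfrac g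
  obtain ⟨N, hN⟩ := inv_mul_pow_mem_of_isGarsideElt hΔ hΔG b.2
  exact ⟨N, by simpa [mul_assoc] using P.mul_mem a.2 hN⟩

lemma exists_gdvdR_glb (hG : IsGarsideGroup P Δ) (a b : G) : ∃ d, gdvdR P d a ∧ gdvdR P d b ∧
    ∀ w, gdvdR P w a → gdvdR P w b → gdvdR P w d := by
  obtain ⟨hmon, -, hΔ, -⟩ := id hG
  have hglb : ∀ a b : P, ∃ d, IsGlbR a b d := hmon.2.2.2.2.2.2.1
  obtain ⟨q, haq, hbq⟩ : ∃ q, a * q ∈ P ∧ b * q ∈ P := by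
    obtain ⟨N₁, ha⟩ := hG.exists_mul_pow_mem a
    obtain ⟨N₂, hb⟩ := hG.exists_mul_pow_mem b
    refine ⟨Δ ^ (N₁ + N₂), ?_, ?_⟩
    · rw [pow_add, ← mul_assoc]; exact P.mul_mem ha (pow_mem hΔ _)
    · rw [add_comm, pow_add, ← mul_assoc]; exact P.mul_mem hb (pow_mem hΔ _)
  obtain ⟨d, -, hda, hdb, hd⟩ := exists_gdvdR_glb_of_mem hglb haq hbq
  refine ⟨d * q⁻¹, ?_, ?_, fun w hwa hwb => ?_⟩
  · rw [← gdvdR_mul_right_iff q]; simpa using hda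
  · rw [← gdvdR_mul_right_iff q]; simpa using hdb
  · obtain ⟨K, hK⟩ := hG.exists_mul_pow_mem (w * q)
    have := gdvdR_mul_of_gdvdR_glb hglb haq hbq (pow_mem hΔ K) hd hK
      ((gdvdR_mul_right_iff _).2 ((gdvdR_mul_right_iff q).2 hwa))
      ((gdvdR_mul_right_iff _).2 ((gdvdR_mul_right_iff q).2 hwb))
    rw [← gdvdR_mul_right_iff q, ← gdvdR_mul_right_iff (Δ ^ K)]
    simpa using this

lemma exists_gdvdR_glb_finite (hG : IsGarsideGroup P Δ) (f : ℕ → G) (m : ℕ) : ∃ d,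
    (∀ i ≤ m, gdvdR P d (f i)) ∧ ∀ w, (∀ i ≤ m, gdvdR P w (f i)) → gdvdR P w d := by
  induction m with
  | zero =>
    refine ⟨f 0, fun i hi => ?_, fun w hw => hw 0 le_rfl⟩
    rw [Nat.le_zero.1 hi]
    exact gdvdR_refl P _
  | succ m ih =>
    obtain ⟨d₀, hd₀f, hd₀⟩ := ih
    obtain ⟨d, hdf, hdd₀, hd⟩ := hG.exists_gdvdR_glb (f (m + 1)) d₀
    refine ⟨d, fun i hi => ?_,
      fun w hw => hd w (hw _ le_rfl) (hd₀ w fun i hi => hw i (by omega))⟩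
    rcases Nat.lt_or_eq_of_le hi with hi | rfl
    · exact gdvdR_trans hdd₀ (hd₀f i (by omega))
    · exact hdf

lemma gdvdL_zpow_add_mul (hG : IsGarsideGroup P Δ) {t u : ℤ} {a b : G}
    (ha : gdvdL P (Δ ^ t) a) (hb : gdvdL P (Δ ^ u) b) : gdvdL P (Δ ^ (t + u)) (a * b) := by
  unfold gdvdL at *
  convert P.mul_mem (hG.zpow_mul_mul_zpow_neg_mem (-u) ha) hb using 1
  group

lemma gdvdL_zpow_mul_pow (hG : IsGarsideGroup P Δ) {t : ℤ} {a : G} (ha : gdvdL P (Δ ^ t) a)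
    (k : ℕ) : gdvdL P (Δ ^ (k * t)) (a ^ k) := by
  induction k with
  | zero => simp [gdvdL, P.one_mem]
  | succ k ih => simpa [add_mul, pow_succ] using hG.gdvdL_zpow_add_mul ih ha

/- With `y i = Δ ^ (-(i * u)) * x ^ i`, the `≤_R`-meet `c` of `y 0, …, y m` satisfies
`Δ ^ u * c * x⁻¹ ≤_R y i` for `i ≤ m`, since `y (i + 1) = Δ ^ (-u) * y i * x` and
`c ≤_R y 0 = 1 ≤_R y (m + 1)`; hence `Δ ^ u * c * x⁻¹ ≤_R c`, i.e. `Δ ^ u ≤_R c * x * c⁻¹`.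
-/
lemma exists_conj_gdvdL_of_gdvdL_pow (hG : IsGarsideGroup P Δ) {x : G} {u : ℤ} {m : ℕ}
    (hx : gdvdL P (Δ ^ ((m + 1 : ℕ) * u)) (x ^ (m + 1))) :
    ∃ c, gdvdL P (Δ ^ u) (c * x * c⁻¹) := by
  set y : ℕ → G := fun i => Δ ^ (-(i * u)) * x ^ i with hy
  have hy_succ (i : ℕ) : y (i + 1) = Δ ^ (-u) * y i * x := by
    simp only [hy, pow_succ, Nat.cast_add, Nat.cast_one, add_mul, one_mul, neg_add, zpow_add]
    group
  obtain ⟨c, hcy, hc⟩ := hG.exists_gdvdR_glb_finite y m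
  have hc_succ : ∀ i ≤ m, gdvdR P c (y (i + 1)) := by
    intro i hi
    rcases Nat.lt_or_eq_of_le hi with hi | rfl
    · exact hcy (i + 1) hi
    · refine gdvdR_trans (hcy 0 (Nat.zero_le _)) ?_
      simpa [gdvdR, hy, gdvdL] using hx
  have hlow : ∀ i ≤ m, gdvdR P (Δ ^ u * c * x⁻¹) (y i) := by
    intro i hi
    have := hG.gdvdR_zpow_mul_left u (hy_succ i ▸ hc_succ i hi)
    rw [← gdvdR_mul_right_iff x]
    simpa [mul_assoc] using this
  refine ⟨c, (hG.gdvdL_zpow_iff_gdvdR u _).2 ?_⟩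
  have := hc _ hlow
  unfold gdvdR at this ⊢
  convert this using 1
  group

end IsGarsideGroup

-- `inf_s g = max (summitInfSet P Δ g)` and `sup_s g = min (summitSupSet P Δ g)`.
def summitInfSet (P : Submonoid G) (Δ g : G) : Set ℤ :=
  {t | ∃ h, IsConj g h ∧ gdvdL P (Δ ^ t) h}

def summitSupSet (P : Submonoid G) (Δ g : G) : Set ℤ :=
  {t | ∃ h, IsConj g h ∧ gdvdL P h (Δ ^ t)}

lemma summitInfSet_eq_of_isConj (P : Submonoid G) (Δ : G) {g g' : G} (hg : IsConj g g') :
    summitInfSet P Δ g = summitInfSet P Δ g' := by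
  ext t
  exact ⟨fun ⟨h, hgh, ht⟩ => ⟨h, hg.symm.trans hgh, ht⟩,
    fun ⟨h, hgh, ht⟩ => ⟨h, hg.trans hgh, ht⟩⟩

lemma IsConj.inv {a b : G} (h : IsConj a b) : IsConj a⁻¹ b⁻¹ := by
  obtain ⟨c, rfl⟩ := isConj_iff.1 h
  exact isConj_iff.2 ⟨c, by group⟩

namespace IsGarsideGroup

lemma mem_summitInfSet_iff_pow (hG : IsGarsideGroup P Δ) (g : G) (t : ℤ) {n : ℕ}
    (hn : n ≠ 0) :
    t ∈ summitInfSet P Δ g ↔ (n * t) ∈ summitInfSet P Δ (g ^ n) := by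
  constructor
  · rintro ⟨h, hgh, ht⟩
    exact ⟨h ^ n, hgh.pow _, hG.gdvdL_zpow_mul_pow ht _⟩
  · rintro ⟨h, hgh, ht⟩
    obtain ⟨m, rfl⟩ := Nat.exists_eq_succ_of_ne_zero hn
    obtain ⟨c, rfl⟩ := isConj_iff.1 hgh
    rw [← conj_pow] at ht
    obtain ⟨c', hc'⟩ := hG.exists_conj_gdvdL_of_gdvdL_pow ht
    exact ⟨_, isConj_iff.2 ⟨c' * c, by group⟩, hc'⟩

lemma summitInfSet_eq_of_isConj_pow (hG : IsGarsideGroup P Δ) {g g' : G} {n : ℕ} (hn : n ≠ 0)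
    (hgg' : IsConj (g ^ n) (g' ^ n)) : summitInfSet P Δ g = summitInfSet P Δ g' := by
  ext t
  rw [hG.mem_summitInfSet_iff_pow g t hn, hG.mem_summitInfSet_iff_pow g' t hn,
    summitInfSet_eq_of_isConj P Δ hgg']

lemma summitSupSet_eq_neg (hG : IsGarsideGroup P Δ) (g : G) :
    summitSupSet P Δ g = -summitInfSet P Δ g⁻¹ := by
  ext t
  refine ⟨fun ⟨h, hgh, ht⟩ => ⟨h⁻¹, hgh.inv, ?_⟩,
    fun ⟨h, hgh, ht⟩ => ⟨h⁻¹, ?_, ?_⟩⟩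
  · exact (hG.gdvdL_zpow_iff_gdvdR _ _).2 (by simpa [gdvdR, gdvdL] using ht)
  · simpa using hgh.inv
  · simpa [gdvdL, gdvdR] using (hG.gdvdL_zpow_iff_gdvdR _ _).1 ht

end IsGarsideGroup

end GarsideGroup

lemma isGreatest_neg_of_isLeast_neg {α : Type*} [AddCommGroup α] [PartialOrder α]
    [IsOrderedAddMonoid α] {S : Set α} {s : α} (h : IsLeast (-S) s) : IsGreatest S (-s) :=
  ⟨Set.mem_neg.1 h.1, fun _ ht => le_neg.1 (h.2 (Set.neg_mem_neg.2 ht))⟩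

/-- **Corollary 6.3.** If `gⁿ` is conjugate to `g⁻ⁿ` for some `n ≥ 1`, then
`inf_s(g) = -sup_s(g)`. -/
theorem infs_eq_neg_sups_of_conj_inv_pow {G : Type*} [Group G]
    (P : Submonoid G) (Δ : G) (hG : IsGarsideGroup P Δ) (g : G)
    (hconj : ∃ n : ℕ, 1 ≤ n ∧ IsConj (g ^ n) (g⁻¹ ^ n)) (r s : ℤ)
    (hr : IsGreatest {t : ℤ | ∃ h : G, IsConj g h ∧ gdvdL P (Δ ^ t) h} r)
    (hs : IsLeast {t : ℤ | ∃ h : G, IsConj g h ∧ gdvdL P h (Δ ^ t)} s) :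
    r = -s := by
  obtain ⟨n, hn, hgn⟩ := hconj
  have hs' : IsLeast (-summitInfSet P Δ g) s := by
    rw [hG.summitInfSet_eq_of_isConj_pow (by omega) hgn, ← hG.summitSupSet_eq_neg]
    exact hs
  exact hr.unique (isGreatest_neg_of_isLeast_neg hs')
end

section
/- Let G be a Garside group with positive monoid G⁺ and Garside element Δ, and let g ∈ G be in its super summit set: for every conjugate h of g and every integer t, Δ^t ≤_L h implies Δ^t ≤_L g, and h ≤_L Δ^t implies g ≤_L Δ^t. Then for every n ≥ 1: n·(|g|_𝒟 − 2) < |gⁿ|_𝒟 ≤ n·|g|_𝒟. -/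
/-- The set `𝒟 = L(Δ)` of simple elements, viewed as a subset of the group `G`. -/
def simples {G : Type*} [Group G] (P : Submonoid G) (Δ : G) : Set G :=
  {x : G | x ∈ P ∧ x⁻¹ * Δ ∈ P}

/-- The set of lengths of expressions of `g` as a product of elements of `S ∪ S⁻¹`. -/
def wlenSet {G : Type*} [Group G] (S : Set G) (g : G) : Set ℕ :=
  {ℓ : ℕ | ∃ L : List G, (∀ x ∈ L, x ∈ S ∪ S⁻¹) ∧ L.length = ℓ ∧ L.prod = g}

/-!
A word over `𝒟 ∪ 𝒟⁻¹` with `p` letters in `𝒟` and `q` in `𝒟⁻¹` lies between `Δ ^ (-q)` and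
`Δ ^ p`; conversely, if `Δ ^ (-a) ≤ g ≤ Δ ^ b` then `g` has a word of length `a + b`, since `≤_L`
is a lattice order on `G` and `g = d * (g⁻¹ * d)⁻¹` with `d = 1 ∨ g`. A geodesic for `gⁿ` thus gives
`Δ ^ (n * t) ≤ gⁿ ≤ Δ ^ (n * s)` with `t = -⌈q / n⌉`, `s = ⌈p / n⌉`. If `Δ ^ (n * t) ≤ gⁿ`, the join
`e` of the elements `g⁻ⁱ Δ ^ (i * t)`, `i < n`, satisfies `Δ ^ t ≤ e⁻¹ g e`, so `Δ ^ t ≤ g` because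
`g` is super summit; dually `g ≤ Δ ^ s`. Hence `|g| ≤ ⌈q / n⌉ + ⌈p / n⌉ < (|gⁿ| + 2n) / n`.
-/

section GroupDivisibility

variable {G : Type*} [Group G] {P : Submonoid G}

theorem gdvdL_refl (a : G) : gdvdL P a a := by
  simp [gdvdL, P.one_mem]

theorem gdvdL.trans {a b c : G} (hab : gdvdL P a b) (hbc : gdvdL P b c) : gdvdL P a c := by
  simpa [gdvdL, mul_assoc] using P.mul_mem hab hbc

theorem one_gdvdL_iff {a : G} : gdvdL P 1 a ↔ a ∈ P := by
  simp [gdvdL]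

theorem gdvdL_mul_left_iff (c : G) {a b : G} :
    gdvdL P (c * a) (c * b) ↔ gdvdL P a b := by
  simp [gdvdL, mul_assoc]

theorem inv_gdvdL_inv_iff {a c : G}
    (hc : ∀ p, c * p * c⁻¹ ∈ P ↔ p ∈ P) : gdvdL P c⁻¹ a⁻¹ ↔ gdvdL P a c := by
  rw [gdvdL, gdvdL, ← hc (a⁻¹ * c)]
  group

theorem exists_lub_family
    (hjoin : ∀ x y : G, ∃ d, gdvdL P x d ∧ gdvdL P y d ∧
      ∀ z, gdvdL P x z → gdvdL P y z → gdvdL P d z)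
    (f : ℕ → G) (m : ℕ) :
    ∃ e, (∀ i ≤ m, gdvdL P (f i) e) ∧ ∀ z, (∀ i ≤ m, gdvdL P (f i) z) → gdvdL P e z := by
  induction m with
  | zero => exact ⟨f 0, fun i hi => by rw [Nat.le_zero.mp hi]; exact gdvdL_refl _,
      fun z hz => hz 0 le_rfl⟩
  | succ m ih =>
    obtain ⟨e, hfe, he⟩ := ih
    obtain ⟨d, hed, hfd, hd⟩ := hjoin e (f (m + 1))
    refine ⟨d, fun i hi => ?_, fun z hz => hd z (he z fun i hi => hz i (by omega)) (hz _ le_rfl)⟩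
    rcases Nat.lt_or_eq_of_le hi with hi | rfl
    · exact (hfe i (by omega)).trans hed
    · exact hfd

/-- `z ↦ g⁻¹ z c` is an order automorphism shifting the family `(gⁱ)⁻¹ cⁱ` by one, and
`(gⁿ)⁻¹ cⁿ ≤ 1`; so it moves the join `e` of the family over `i < n` down, which says
`c ≤ e⁻¹ g e`. -/
theorem exists_isConj_gdvdL_of_gdvdL_pow
    (hjoin : ∀ x y : G, ∃ d, gdvdL P x d ∧ gdvdL P y d ∧
      ∀ z, gdvdL P x z → gdvdL P y z → gdvdL P d z)
    {c g : G} (hc : ∀ p, c * p * c⁻¹ ∈ P ↔ p ∈ P) {n : ℕ} (hn : n ≠ 0)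
    (h : gdvdL P (c ^ n) (g ^ n)) : ∃ h, IsConj g h ∧ gdvdL P c h := by
  obtain ⟨m, rfl⟩ := Nat.exists_eq_succ_of_ne_zero hn
  set φ : G → G := fun z => g⁻¹ * z * c
  have hφ : ∀ a b, gdvdL P (φ a) (φ b) ↔ gdvdL P a b := fun a b => by
    rw [gdvdL, gdvdL, ← hc]
    simp only [φ]
    group
  set k : ℕ → G := fun i => (g ^ i)⁻¹ * c ^ i
  have hk : ∀ i, φ (k i) = k (i + 1) := fun i => by
    simp only [φ, k, pow_succ]
    group
  obtain ⟨e, hke, he⟩ := exists_lub_family hjoin k m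
  have hkn : gdvdL P (k (m + 1)) e := by
    refine .trans ?_ (hke 0 (Nat.zero_le _))
    simpa [k, gdvdL] using h
  have hφψ : ∀ z, φ (g * z * c⁻¹) = z := fun z => by simp only [φ]; group
  have he_le : gdvdL P e (g * e * c⁻¹) := he _ fun i hi => by
    rw [← hφ, hφψ, hk]
    rcases Nat.lt_or_eq_of_le hi with hi | rfl
    · exact hke (i + 1) hi
    · exact hkn
  have hφe : gdvdL P (φ e) e := by simpa only [hφψ] using (hφ _ _).mpr he_le
  refine ⟨e⁻¹ * g * e, isConj_iff.mpr ⟨e⁻¹, by group⟩, ?_⟩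
  simpa [gdvdL, φ, mul_assoc] using hφe

end GroupDivisibility

section WordLength

variable {G : Type*} [Group G] {S : Set G}

theorem one_mem_wlenSet {x : G} (hx : x ∈ S) : 1 ∈ wlenSet S x :=
  ⟨[x], by simp [hx], rfl, by simp⟩

theorem zero_mem_wlenSet_one : 0 ∈ wlenSet S 1 :=
  ⟨[], by simp, rfl, rfl⟩

theorem add_mem_wlenSet {a b : ℕ} {x y : G} (ha : a ∈ wlenSet S x) (hb : b ∈ wlenSet S y) :
    a + b ∈ wlenSet S (x * y) := by
  obtain ⟨L, hL, rfl, rfl⟩ := ha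
  obtain ⟨M, hM, rfl, rfl⟩ := hb
  refine ⟨L ++ M, fun z hz => ?_, by simp, by simp⟩
  rcases List.mem_append.mp hz with hz | hz
  exacts [hL z hz, hM z hz]

theorem mem_wlenSet_inv {a : ℕ} {x : G} (ha : a ∈ wlenSet S x) : a ∈ wlenSet S x⁻¹ := by
  obtain ⟨L, hL, rfl, rfl⟩ := ha
  refine ⟨(L.map (·⁻¹)).reverse, fun z hz => ?_, by simp, (List.prod_inv_reverse L).symm⟩
  obtain ⟨y, hy, rfl⟩ := List.mem_map.mp (List.mem_reverse.mp hz)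
  rcases hL y hy with hy | hy
  exacts [Or.inr (Set.inv_mem_inv.mpr hy), Or.inl hy]

theorem mul_mem_wlenSet_pow {a : ℕ} {x : G} (ha : a ∈ wlenSet S x) (n : ℕ) :
    n * a ∈ wlenSet S (x ^ n) := by
  induction n with
  | zero => simpa using zero_mem_wlenSet_one
  | succ n ih => simpa [add_mul, add_comm, pow_succ'] using add_mem_wlenSet ha ih

end WordLength

theorem dvdL_iff_gdvdL_s16 {G : Type*} [Group G] {P : Submonoid G} {u v : P} :
    dvdL u v ↔ gdvdL P u v := by
  refine ⟨fun ⟨c, hc⟩ => ?_, fun h => ⟨⟨_, h⟩, Subtype.ext (by simp)⟩⟩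
  rw [gdvdL, ← hc]
  simp

theorem dvdR_iff_gdvdR_s16 {G : Type*} [Group G] {P : Submonoid G} {u v : P} :
    dvdR u v ↔ gdvdR P u v := by
  refine ⟨fun ⟨c, hc⟩ => ?_, fun h => ⟨⟨_, h⟩, Subtype.ext (by simp)⟩⟩
  rw [gdvdR, ← hc]
  simp

theorem Atomic.eq_one_of_mul_eq_one {M : Type*} [Monoid M] (hM : Atomic M) {u v : M}
    (huv : u * v = 1) : u = 1 := by
  obtain ⟨hfac, hbdd⟩ := hM
  obtain ⟨lu, hlu, rfl⟩ := hfac u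
  obtain ⟨lv, hlv, rfl⟩ := hfac v
  by_contra hne
  have hlong : ∀ k, ∃ L : List M, (∀ x ∈ L, IsAtomElt x) ∧ L.prod = 1 ∧ k ≤ L.length := by
    intro k
    induction k with
    | zero => exact ⟨[], by simp, by simp, le_rfl⟩
    | succ k ih =>
      obtain ⟨L, hL, hprod, hlen⟩ := ih
      have hlu_ne : lu ≠ [] := by rintro rfl; exact hne List.prod_nil
      refine ⟨lu ++ lv ++ L, ?_, by simp [hprod, huv], ?_⟩
      · simp only [List.mem_append]
        rintro x ((hx | hx) | hx)
        exacts [hlu x hx, hlv x hx, hL x hx]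
      · have := List.length_pos_iff.mpr hlu_ne
        simp only [List.length_append]
        omega
  obtain ⟨N, hN⟩ := hbdd 1
  obtain ⟨L, hL, hprod, hlen⟩ := hlong (N + 1)
  have := hN L hL hprod
  omega

namespace IsGarsideGroup

variable {G : Type*} [Group G] {P : Submonoid G} {Δ : G}

theorem delta_mem (hG : IsGarsideGroup P Δ) : Δ ∈ P := hG.2.2.1

theorem exists_eq_mul_inv (hG : IsGarsideGroup P Δ) (g : G) : ∃ a ∈ P, ∃ b ∈ P, g = a * b⁻¹ := by
  obtain ⟨a, b, rfl⟩ := hG.2.1 g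
  exact ⟨a, a.2, b, b.2, rfl⟩

theorem eq_one_of_mem_of_inv_mem (hG : IsGarsideGroup P Δ) {x : G} (hx : x ∈ P)
    (hx' : x⁻¹ ∈ P) : x = 1 := by
  have h : (⟨x, hx⟩ : P) * ⟨x⁻¹, hx'⟩ = 1 := Subtype.ext (by simp)
  simpa using congrArg Subtype.val (hG.1.2.2.2.1.eq_one_of_mul_eq_one h)

theorem closure_simples (hG : IsGarsideGroup P Δ) : Submonoid.closure (simples P Δ) = P := by
  obtain ⟨hΔ, hLR, hgen⟩ := hG.2.2
  refine le_antisymm (Submonoid.closure_le.mpr fun x hx => hx.1) fun p hp => ?_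
  have key : ∀ y ∈ Submonoid.closure (Lset (⟨Δ, hΔ⟩ : P)),
      (y : G) ∈ Submonoid.closure (simples P Δ) := fun y hy => by
    induction hy using Submonoid.closure_induction with
    | mem x hx => exact Submonoid.subset_closure ⟨x.2, dvdL_iff_gdvdL_s16.mp hx⟩
    | one => exact Submonoid.one_mem _
    | mul x y _ _ hx hy => exact Submonoid.mul_mem _ hx hy
  exact key ⟨p, hp⟩ (hgen ▸ trivial)

theorem inv_mul_delta_mem_iff (hG : IsGarsideGroup P Δ) {x : G} (hx : x ∈ P) :
    x⁻¹ * Δ ∈ P ↔ Δ * x⁻¹ ∈ P := by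
  obtain ⟨hΔ, hLR, -⟩ := hG.2.2
  exact dvdL_iff_gdvdL_s16.symm.trans ((Set.ext_iff.mp hLR ⟨x, hx⟩).trans dvdR_iff_gdvdR_s16)

theorem exists_lcm (hG : IsGarsideGroup P Δ) {a b : G} (ha : a ∈ P) (hb : b ∈ P) :
    ∃ d ∈ P, gdvdL P a d ∧ gdvdL P b d ∧ ∀ c ∈ P, gdvdL P a c → gdvdL P b c → gdvdL P d c := by
  obtain ⟨d, had, hbd, hd⟩ := hG.1.2.2.2.2.2.1 ⟨a, ha⟩ ⟨b, hb⟩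
  exact ⟨d, d.2, dvdL_iff_gdvdL_s16.mp had, dvdL_iff_gdvdL_s16.mp hbd,
    fun c hc hac hbc => dvdL_iff_gdvdL_s16.mp
      (hd ⟨c, hc⟩ (dvdL_iff_gdvdL_s16.mpr hac) (dvdL_iff_gdvdL_s16.mpr hbc))⟩

theorem conj_delta_mem (hG : IsGarsideGroup P Δ) {p : G} (hp : p ∈ P) : Δ * p * Δ⁻¹ ∈ P := by
  rw [← hG.closure_simples] at hp
  induction hp using Submonoid.closure_induction with
  | mem x hx =>
    have hx' : Δ * x⁻¹ ∈ P := (hG.inv_mul_delta_mem_iff hx.1).mp hx.2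
    have := (hG.inv_mul_delta_mem_iff hx').mp (by simpa using hx.1)
    simpa [mul_assoc] using this
  | one => simp [P.one_mem]
  | mul x y _ _ hx hy => simpa [mul_assoc] using P.mul_mem hx hy

theorem inv_conj_delta_mem (hG : IsGarsideGroup P Δ) {p : G} (hp : p ∈ P) :
    Δ⁻¹ * p * Δ ∈ P := by
  rw [← hG.closure_simples] at hp
  induction hp using Submonoid.closure_induction with
  | mem x hx =>
    have := (hG.inv_mul_delta_mem_iff hx.2).mpr (by simpa using hx.1)
    simpa [mul_assoc] using this
  | one => simp [P.one_mem]
  | mul x y _ _ hx hy => simpa [mul_assoc] using P.mul_mem hx hy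

theorem conj_zpow_mem_iff (hG : IsGarsideGroup P Δ) (t : ℤ) (p : G) :
    Δ ^ t * p * (Δ ^ t)⁻¹ ∈ P ↔ p ∈ P := by
  have hΔ : ∀ q, Δ * q * Δ⁻¹ ∈ P ↔ q ∈ P := fun q =>
    ⟨fun h => by simpa [mul_assoc] using hG.inv_conj_delta_mem h, hG.conj_delta_mem⟩
  induction t using Int.induction_on generalizing p with
  | zero => simp
  | succ k ih =>
    have e : Δ ^ ((k : ℤ) + 1) * p * (Δ ^ ((k : ℤ) + 1))⁻¹ =
        Δ * (Δ ^ (k : ℤ) * p * (Δ ^ (k : ℤ))⁻¹) * Δ⁻¹ := by group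
    rw [e, hΔ]
    exact ih p
  | pred k ih =>
    have e : Δ * (Δ ^ (-(k : ℤ) - 1) * p * (Δ ^ (-(k : ℤ) - 1))⁻¹) * Δ⁻¹ =
        Δ ^ (-(k : ℤ)) * p * (Δ ^ (-(k : ℤ)))⁻¹ := by group
    rw [← hΔ, e]
    exact ih p

theorem zpow_gdvdL_zpow (hG : IsGarsideGroup P Δ) {a b : ℤ} (h : a ≤ b) :
    gdvdL P (Δ ^ a) (Δ ^ b) := by
  obtain ⟨k, hk⟩ := Int.eq_ofNat_of_zero_le (sub_nonneg.mpr h)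
  have : (Δ ^ a)⁻¹ * Δ ^ b = Δ ^ k := by
    rw [← zpow_natCast, ← hk, ← zpow_neg, ← zpow_add]; ring_nf
  rw [gdvdL, this]
  exact pow_mem hG.delta_mem k

theorem zpow_add_gdvdL_mul (hG : IsGarsideGroup P Δ) {a b : ℤ} {x y : G}
    (hx : gdvdL P (Δ ^ a) x) (hy : gdvdL P (Δ ^ b) y) : gdvdL P (Δ ^ (a + b)) (x * y) := by
  have := P.mul_mem ((hG.conj_zpow_mem_iff (-b) _).mpr hx) hy
  rw [gdvdL, zpow_add]
  convert this using 1
  group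

theorem mul_gdvdL_zpow_add (hG : IsGarsideGroup P Δ) {a b : ℤ} {x y : G}
    (hx : gdvdL P x (Δ ^ a)) (hy : gdvdL P y (Δ ^ b)) : gdvdL P (x * y) (Δ ^ (a + b)) := by
  have := P.mul_mem hy ((hG.conj_zpow_mem_iff (-b) _).mpr hx)
  rw [gdvdL, zpow_add]
  convert this using 1
  group

theorem exists_gdvdL_zpow_of_mem (hG : IsGarsideGroup P Δ) {b : G} (hb : b ∈ P) :
    ∃ m : ℤ, gdvdL P b (Δ ^ m) := by
  rw [← hG.closure_simples] at hb
  induction hb using Submonoid.closure_induction with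
  | mem x hx => exact ⟨1, by simpa [gdvdL] using hx.2⟩
  | one => exact ⟨0, by simp [gdvdL, P.one_mem]⟩
  | mul x y _ _ hx hy =>
    obtain ⟨m, hm⟩ := hx
    obtain ⟨m', hm'⟩ := hy
    exact ⟨m + m', hG.mul_gdvdL_zpow_add hm hm'⟩

theorem exists_zpow_gdvdL (hG : IsGarsideGroup P Δ) (x : G) : ∃ m : ℤ, gdvdL P (Δ ^ m) x := by
  obtain ⟨a, ha, b, hb, rfl⟩ := hG.exists_eq_mul_inv x
  obtain ⟨m, hm⟩ := hG.exists_gdvdL_zpow_of_mem hb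
  refine ⟨-m, ?_⟩
  have := P.mul_mem ((hG.conj_zpow_mem_iff m a).mpr ha) ((hG.conj_zpow_mem_iff m _).mpr hm)
  rw [gdvdL]
  convert this using 1
  group

theorem exists_lub (hG : IsGarsideGroup P Δ) (x y : G) :
    ∃ d, gdvdL P x d ∧ gdvdL P y d ∧ ∀ z, gdvdL P x z → gdvdL P y z → gdvdL P d z := by
  obtain ⟨m, hm⟩ := hG.exists_zpow_gdvdL x
  obtain ⟨m', hm'⟩ := hG.exists_zpow_gdvdL y
  have hx := (hG.zpow_gdvdL_zpow (min_le_left m m')).trans hm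
  have hy := (hG.zpow_gdvdL_zpow (min_le_right m m')).trans hm'
  set c := Δ ^ min m m'
  obtain ⟨d, -, hxd, hyd, hd⟩ := hG.exists_lcm hx hy
  refine ⟨c * d, ?_, ?_, fun z hxz hyz => ?_⟩
  · simpa using (gdvdL_mul_left_iff c).mpr hxd
  · simpa using (gdvdL_mul_left_iff c).mpr hyd
  · have hcz : c⁻¹ * z ∈ P := hx.trans hxz
    have := hd _ hcz ((gdvdL_mul_left_iff c⁻¹).mpr hxz) ((gdvdL_mul_left_iff c⁻¹).mpr hyz)
    simpa using (gdvdL_mul_left_iff c).mpr this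

/-- Peel off a simple on the right: `d = 1 ∨ x Δ⁻¹` satisfies `d ≤ Δ ^ k` and `d⁻¹ x ∈ 𝒟`. -/
theorem mem_wlenSet_of_gdvdL_zpow (hG : IsGarsideGroup P Δ) {k : ℕ} {x : G} (hx : x ∈ P)
    (h : gdvdL P x (Δ ^ (k : ℤ))) : k ∈ wlenSet (simples P Δ) x := by
  induction k generalizing x with
  | zero =>
    rw [hG.eq_one_of_mem_of_inv_mem hx (by simpa [gdvdL] using h)]
    exact zero_mem_wlenSet_one
  | succ k ih =>
    obtain ⟨d, h1d, hxd, hd⟩ := hG.exists_lub 1 (x * Δ⁻¹)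
    have hdk : gdvdL P d (Δ ^ (k : ℤ)) := by
      refine hd _ (one_gdvdL_iff.mpr (by simpa using pow_mem hG.delta_mem k)) ?_
      rw [gdvdL] at h ⊢
      rw [← hG.conj_zpow_mem_iff (-1)]
      convert h using 1
      push_cast
      group
    have hdx : gdvdL P d x :=
      hd _ (one_gdvdL_iff.mpr hx) (by simpa [gdvdL, mul_assoc] using hG.delta_mem)
    have hsimple : d⁻¹ * x ∈ simples P Δ := by
      refine ⟨hdx, ?_⟩
      rw [gdvdL] at hxd
      rw [← hG.conj_zpow_mem_iff 1]
      convert hxd using 1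
      group
    simpa using add_mem_wlenSet (ih (one_gdvdL_iff.mp h1d) hdk) (one_mem_wlenSet hsimple)

theorem add_mem_wlenSet_of_zpow_gdvdL_of_gdvdL_zpow (hG : IsGarsideGroup P Δ) {a b : ℕ} {g : G}
    (ha : gdvdL P (Δ ^ (-(a : ℤ))) g) (hb : gdvdL P g (Δ ^ (b : ℤ))) :
    a + b ∈ wlenSet (simples P Δ) g := by
  obtain ⟨d, h1d, hgd, hd⟩ := hG.exists_lub 1 g
  have hdb : gdvdL P d (Δ ^ (b : ℤ)) :=
    hd _ (one_gdvdL_iff.mpr (by simpa using pow_mem hG.delta_mem b)) hb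
  have hgΔ : g * Δ ^ (a : ℤ) ∈ P := by
    rw [← hG.conj_zpow_mem_iff (a : ℤ)]
    simpa [gdvdL, mul_assoc] using ha
  have hda : gdvdL P d (g * Δ ^ (a : ℤ)) :=
    hd _ (one_gdvdL_iff.mpr hgΔ) (by simpa [gdvdL] using pow_mem hG.delta_mem a)
  have hma : gdvdL P (g⁻¹ * d) (Δ ^ (a : ℤ)) := by simpa [gdvdL, mul_assoc] using hda
  have := add_mem_wlenSet (hG.mem_wlenSet_of_gdvdL_zpow (one_gdvdL_iff.mp h1d) hdb)
    (mem_wlenSet_inv (hG.mem_wlenSet_of_gdvdL_zpow hgd hma))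
  simpa [add_comm] using this

theorem exists_bounds_of_mem_wlenSet (hG : IsGarsideGroup P Δ) {ℓ : ℕ} {g : G}
    (h : ℓ ∈ wlenSet (simples P Δ) g) :
    ∃ p q : ℕ, p + q = ℓ ∧ gdvdL P (Δ ^ (-(q : ℤ))) g ∧ gdvdL P g (Δ ^ (p : ℤ)) := by
  obtain ⟨L, hL, rfl, rfl⟩ := h
  induction L with
  | nil => exact ⟨0, 0, rfl, by simp [gdvdL, P.one_mem], by simp [gdvdL, P.one_mem]⟩
  | cons x L ih =>
    obtain ⟨p, q, hpq, hq, hp⟩ := ih fun y hy => hL y (List.mem_cons_of_mem x hy)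
    rcases hL x List.mem_cons_self with hx | hx
    · refine ⟨p + 1, q, by simp [← hpq]; omega, ?_, ?_⟩
      · simpa using hG.zpow_add_gdvdL_mul (a := 0) (by simpa [gdvdL] using hx.1) hq
      · simpa [add_comm] using hG.mul_gdvdL_zpow_add (a := 1) (by simpa [gdvdL] using hx.2) hp
    · refine ⟨p, q + 1, by simp [← hpq]; omega, ?_, ?_⟩
      · have hΔx : Δ * x ∈ P := by simpa using (hG.inv_mul_delta_mem_iff hx.1).mp hx.2
        simpa [neg_add, add_comm] using
          hG.zpow_add_gdvdL_mul (a := -1) (by simpa [gdvdL] using hΔx) hq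
      · simpa using hG.mul_gdvdL_zpow_add (a := 0) (by simpa [gdvdL] using hx.1) hp

end IsGarsideGroup

def IsSuperSummit {G : Type*} [Group G] (P : Submonoid G) (Δ g : G) : Prop :=
  ∀ h : G, IsConj g h → ∀ t : ℤ,
    (gdvdL P (Δ ^ t) h → gdvdL P (Δ ^ t) g) ∧ (gdvdL P h (Δ ^ t) → gdvdL P g (Δ ^ t))

namespace IsSuperSummit

variable {G : Type*} [Group G] {P : Submonoid G} {Δ g : G}

theorem zpow_gdvdL_of_zpow_mul_gdvdL_pow (hss : IsSuperSummit P Δ g)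
    (hG : IsGarsideGroup P Δ) {n : ℕ} (hn : n ≠ 0) {t : ℤ}
    (h : gdvdL P (Δ ^ (n * t)) (g ^ n)) : gdvdL P (Δ ^ t) g := by
  rw [mul_comm, zpow_mul, zpow_natCast] at h
  obtain ⟨k, hgk, hk⟩ :=
    exists_isConj_gdvdL_of_gdvdL_pow hG.exists_lub (hG.conj_zpow_mem_iff t) hn h
  exact (hss k hgk t).1 hk

theorem gdvdL_zpow_of_pow_gdvdL_zpow_mul (hss : IsSuperSummit P Δ g)
    (hG : IsGarsideGroup P Δ) {n : ℕ} (hn : n ≠ 0) {t : ℤ}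
    (h : gdvdL P (g ^ n) (Δ ^ (n * t))) : gdvdL P g (Δ ^ t) := by
  rw [← inv_gdvdL_inv_iff (hG.conj_zpow_mem_iff _), ← inv_pow, ← zpow_neg, ← mul_neg,
    mul_comm, zpow_mul, zpow_natCast] at h
  obtain ⟨k, hgk, hk⟩ :=
    exists_isConj_gdvdL_of_gdvdL_pow hG.exists_lub (hG.conj_zpow_mem_iff (-t)) hn h
  obtain ⟨c, rfl⟩ := isConj_iff.mp hgk
  refine (hss (c * g * c⁻¹) (isConj_iff.mpr ⟨c, rfl⟩) t).2 ?_
  rw [← inv_gdvdL_inv_iff (hG.conj_zpow_mem_iff t), ← zpow_neg]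
  simpa [mul_assoc] using hk

end IsSuperSummit

theorem exists_le_mul_lt_add (q : ℕ) {n : ℕ} (hn : 0 < n) : ∃ a, q ≤ n * a ∧ n * a < q + n := by
  refine ⟨(q + n - 1) / n, ?_, ?_⟩
  · have := Nat.lt_mul_div_succ (q + n - 1) hn
    rw [mul_add] at this
    omega
  · have := Nat.div_mul_le_self (q + n - 1) n
    rw [mul_comm]
    omega

/-- **Theorem 7.1.** If `g ∈ G` is contained in its super summit set, then for any
`n ≥ 1`, `|g|_𝒟 - 2 < |gⁿ|_𝒟 / n ≤ |g|_𝒟`. -/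
theorem geodesic_length_pow {G : Type*} [Group G] (P : Submonoid G) (Δ : G)
    (hG : IsGarsideGroup P Δ) (g : G)
    (hss : ∀ h : G, IsConj g h → ∀ t : ℤ,
      (gdvdL P (Δ ^ t) h → gdvdL P (Δ ^ t) g) ∧
      (gdvdL P h (Δ ^ t) → gdvdL P g (Δ ^ t)))
    (n : ℕ) (hn : 1 ≤ n) (l ln : ℕ)
    (hl : IsLeast (wlenSet (simples P Δ) g) l)
    (hln : IsLeast (wlenSet (simples P Δ) (g ^ n)) ln) :
    (n : ℤ) * ((l : ℤ) - 2) < (ln : ℤ) ∧ (ln : ℤ) ≤ (n : ℤ) * (l : ℤ) := by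
  have hss : IsSuperSummit P Δ g := hss
  have hln_le : ln ≤ n * l := hln.2 (mul_mem_wlenSet_pow hl.1 n)
  obtain ⟨p, q, rfl, hq, hp⟩ := hG.exists_bounds_of_mem_wlenSet hln.1
  obtain ⟨a, hqa, haq⟩ := exists_le_mul_lt_add q hn
  obtain ⟨b, hpb, hbp⟩ := exists_le_mul_lt_add p hn
  have hga : gdvdL P (Δ ^ (-(a : ℤ))) g := hss.zpow_gdvdL_of_zpow_mul_gdvdL_pow hG (by omega)
    ((hG.zpow_gdvdL_zpow (by linarith)).trans hq)
  have hgb : gdvdL P g (Δ ^ (b : ℤ)) := hss.gdvdL_zpow_of_pow_gdvdL_zpow_mul hG (by omega)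
    (hp.trans (hG.zpow_gdvdL_zpow (by exact_mod_cast hpb)))
  have hl_le : l ≤ a + b := hl.2 (hG.add_mem_wlenSet_of_zpow_gdvdL_of_gdvdL_zpow hga hgb)
  have : n * l < p + q + 2 * n := calc
    n * l ≤ n * a + n * b := by rw [← mul_add]; exact Nat.mul_le_mul_left n hl_le
    _ < p + q + 2 * n := by linarith
  exact ⟨by push_cast; linarith, by exact_mod_cast hln_le⟩
end
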